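/- Let G be a finite simple graph that is partially DP-nice, and let G' = G ∨ K₁ be the join of G with a single new vertex adjacent to all vertices of G. If χ_DP(G') > χ_DP(G), then G' is partially DP-nice. -/

import Mathlib

open SimpleGraph

/-- `DPCover G H L` means `(L, H)` is a cover of the graph `G`:
(1) the sets `L u` partition `V(H)`; (2) each `H[L u]` is complete;
(3) for each edge `uv` of `G`, the edges of `H` between `L u` and `L v` form a matching;
(4) there are no edges of `H` between lists of distinct non-adjacent vertices. -/
structure DPCover {V : Type} (G : SimpleGraph V) {W : Type} (H : SimpleGraph W)
    (L : V → Finset W) : Prop where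
  partition : ∀ w : W, ∃! v : V, w ∈ L v
  cliques : ∀ v : V, ∀ a ∈ L v, ∀ b ∈ L v, a ≠ b → H.Adj a b
  matching : ∀ ⦃u v : V⦄, G.Adj u v → ∀ a ∈ L u, ∀ b ∈ L v, ∀ b' ∈ L v,
      H.Adj a b → H.Adj a b' → b = b'
  nonadj : ∀ ⦃u v : V⦄, u ≠ v → ¬ G.Adj u v → ∀ a ∈ L u, ∀ b ∈ L v, ¬ H.Adj a b

/-- A finset is independent in `H` if no two of its elements are adjacent. -/
def IsIndepFinset {W : Type} (H : SimpleGraph W) (S : Finset W) : Prop :=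
  ∀ a ∈ S, ∀ b ∈ S, ¬ H.Adj a b

/-- The independence number of `H`. -/
noncomputable def indepNum {W : Type} [Fintype W] (H : SimpleGraph W) : ℕ :=
  sSup {n : ℕ | ∃ S : Finset W, IsIndepFinset H S ∧ S.card = n}

/-- The DP-chromatic number of `G`: the least `m` such that every `m`-fold cover `(L, H)`
of `G` admits an `H`-coloring, i.e. an independent set in `H` of size `|V(G)|`. -/
noncomputable def chiDP {V : Type} [Fintype V] (G : SimpleGraph V) : ℕ :=
  sInf {m : ℕ | ∀ (W : Type) (_ : Fintype W) (H : SimpleGraph W) (L : V → Finset W),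
    DPCover G H L → (∀ v, (L v).card = m) →
    ∃ S : Finset W, IsIndepFinset H S ∧ S.card = Fintype.card V}

/-- The partial DP `t`-chromatic number of `G`: the minimum of the independence number
`α(H)` over all `t`-fold covers `(L, H)` of `G`. -/
noncomputable def alphaDP {V : Type} [Fintype V] (G : SimpleGraph V) (t : ℕ) : ℕ :=
  sInf {n : ℕ | ∃ (W : Type) (_ : Fintype W) (H : SimpleGraph W) (L : V → Finset W),
    DPCover G H L ∧ (∀ v, (L v).card = t) ∧ _root_.indepNum H = n}

/-- A graph `G` is partially DP-nice if `α_t^{DP}(G) ≥ t|V(G)|/χ_DP(G)` for all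
`t ∈ {1, …, χ_DP(G)}`. -/
def PartiallyDPNice {V : Type} [Fintype V] (G : SimpleGraph V) : Prop :=
  ∀ t : ℕ, 1 ≤ t → t ≤ chiDP G →
    (t * Fintype.card V : ℚ) / (chiDP G : ℚ) ≤ (alphaDP G t : ℚ)

/-- The join `G ∨ K_p` of `G` with the complete graph `K_p`: disjoint copies of `G` and
`K_p` together with all edges between them. -/
def joinComplete {V : Type} (G : SimpleGraph V) (p : ℕ) : SimpleGraph (V ⊕ Fin p) where
  Adj x y :=
    match x, y with
    | .inl a, .inl b => G.Adj a b
    | .inr a, .inr b => a ≠ b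
    | .inl _, .inr _ => True
    | .inr _, .inl _ => True
  symm := ⟨by
    rintro (a | a) (b | b) h
    · exact G.symm.symm _ _ h
    · trivial
    · trivial
    · exact Ne.symm h⟩
  loopless := ⟨by
    rintro (a | a) h
    · exact G.loopless.irrefl a h
    · exact h rfl⟩

/-!
Fix a colour `w₀` in the list of the joined vertex. By the matching condition `w₀` has at most one
neighbour in every other list, so when `t > χ_DP(G)` each list of a `t`-fold cover of `G ∨ K₁`
still holds `χ_DP(G)` colours non-adjacent to `w₀`; these form a cover of `G`, and its colouring
together with `w₀` is independent of size `|V| + 1`. For `t ≤ χ_DP(G)`, restricting a cover of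
`G ∨ K₁` to `G` gives `α_t^{DP}(G ∨ K₁) ≥ α_t^{DP}(G) ≥ t|V|/χ_DP(G)`, which dominates
`t(|V| + 1)/χ_DP(G ∨ K₁)` because `χ_DP(G) ≤ |V|` and `χ_DP(G ∨ K₁) ≥ χ_DP(G) + 1`.
-/

open Finset Function

section IndepNum

variable {W : Type} {H : SimpleGraph W}

theorem IsIndepFinset.insert [DecidableEq W] {S : Finset W} {b : W} (hS : IsIndepFinset H S)
    (hb : ∀ a ∈ S, ¬ H.Adj a b) : IsIndepFinset H (insert b S) := by
  intro x hx y hy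
  rw [mem_insert] at hx hy
  rcases hx with rfl | hx
  · rcases hy with rfl | hy
    · exact H.irrefl
    · exact fun h => hb y hy h.symm
  · rcases hy with rfl | hy
    · exact hb x hx
    · exact hS x hx y hy

theorem IsIndepFinset.map_induce {s : Set W} {S : Finset s}
    (hS : IsIndepFinset (H.induce s) S) : IsIndepFinset H (S.map (Embedding.subtype _)) := by
  simp only [IsIndepFinset, mem_map, Embedding.subtype_apply, forall_exists_index, and_imp]
  rintro _ x hx rfl _ y hy rfl
  exact hS x hx y hy

variable [Fintype W]

theorem bddAbove_card_isIndepFinset :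
    BddAbove {n : ℕ | ∃ S : Finset W, IsIndepFinset H S ∧ S.card = n} :=
  ⟨Fintype.card W, by rintro n ⟨S, -, rfl⟩; exact card_le_univ S⟩

theorem IsIndepFinset.card_le_indepNum {S : Finset W} (hS : IsIndepFinset H S) :
    S.card ≤ _root_.indepNum H :=
  le_csSup bddAbove_card_isIndepFinset ⟨S, hS, rfl⟩

theorem exists_isIndepFinset_card_eq_indepNum :
    ∃ S : Finset W, IsIndepFinset H S ∧ S.card = _root_.indepNum H :=
  Nat.sSup_mem (s := {n | ∃ S : Finset W, IsIndepFinset H S ∧ S.card = n})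
    ⟨0, ∅, by simp [IsIndepFinset]⟩ bddAbove_card_isIndepFinset

theorem indepNum_induce_le (s : Set W) [Fintype s] :
    _root_.indepNum (H.induce s) ≤ _root_.indepNum H := by
  obtain ⟨S, hS, hcard⟩ := exists_isIndepFinset_card_eq_indepNum (H := H.induce s)
  rw [← hcard, ← card_map (Embedding.subtype _)]
  exact hS.map_induce.card_le_indepNum

end IndepNum

namespace DPCover

variable {U V W : Type} {G : SimpleGraph V} {H : SimpleGraph W} {L : V → Finset W}

theorem disjoint (hcov : DPCover G H L) {u v : V} (huv : u ≠ v) : Disjoint (L u) (L v) := by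
  refine disjoint_left.mpr fun a hau hav => huv ?_
  obtain ⟨x, -, hx⟩ := hcov.partition a
  exact (hx u hau).trans (hx v hav).symm

theorem card_filter_adj_le_one [DecidableRel H.Adj] (hcov : DPCover G H L) {u v : V}
    (huv : u ≠ v) {a : W} (ha : a ∈ L u) : ((L v).filter (H.Adj a)).card ≤ 1 := by
  refine card_le_one.mpr fun b hb b' hb' => ?_
  rw [mem_filter] at hb hb'
  by_cases hG : G.Adj u v
  · exact hcov.matching hG a ha b hb.1 b' hb'.1 hb.2 hb'.2
  · exact absurd hb.2 (hcov.nonadj huv hG a ha b hb.1)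

/-- Greedy colouring: each colour already chosen excludes at most one colour of the next list. -/
theorem exists_isIndepFinset_card_eq (hcov : DPCover G H L) (s : Finset V)
    (hs : ∀ v, s.card ≤ (L v).card) :
    ∃ S : Finset W, IsIndepFinset H S ∧ S.card = s.card ∧ ∀ w ∈ S, ∃ u ∈ s, w ∈ L u := by
  classical
  induction s using Finset.induction_on with
  | empty => exact ⟨∅, by simp [IsIndepFinset], rfl, by simp⟩
  | @insert v s hv ih =>
    rw [card_insert_of_notMem hv] at hs
    obtain ⟨S, hS, hScard, hSs⟩ := ih fun u => (hs u).trans' (Nat.le_succ _)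
    have hne : ∀ w ∈ S, ∃ u ≠ v, w ∈ L u := fun w hw =>
      let ⟨u, hu, hwu⟩ := hSs w hw; ⟨u, ne_of_mem_of_not_mem hu hv, hwu⟩
    let B := S.biUnion fun w => (L v).filter (H.Adj w)
    have hB : B.card ≤ S.card * 1 := card_biUnion_le_card_mul _ _ 1 fun w hw =>
      let ⟨_, huv, hwu⟩ := hne w hw; hcov.card_filter_adj_le_one huv hwu
    obtain ⟨b, hbL, hbB⟩ := exists_mem_notMem_of_card_lt_card (s := B) (t := L v)
      (by have := hs v; omega)
    have hbS : b ∉ S := fun hbS =>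
      let ⟨u, huv, hbu⟩ := hne b hbS
      disjoint_left.mp (hcov.disjoint huv) hbu hbL
    refine ⟨insert b S, hS.insert fun a ha hab => hbB ?_, ?_, ?_⟩
    · exact mem_biUnion.mpr ⟨a, ha, mem_filter.mpr ⟨hbL, hab⟩⟩
    · rw [card_insert_of_notMem hbS, card_insert_of_notMem hv, hScard]
    · simp only [mem_insert, forall_eq_or_imp, exists_eq_or_imp]
      exact ⟨Or.inl hbL, fun w hw => Or.inr (hSs w hw)⟩

section Restrict

variable {K : U → Finset W} [DecidablePred (· ∈ {w | ∃ u, w ∈ K u})]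

theorem restrict (hcov : DPCover G H L) {f : U → V} (hf : Injective f)
    (hK : ∀ u, K u ⊆ L (f u)) :
    DPCover (G.comap f) (H.induce {w | ∃ u, w ∈ K u})
      (fun u => (K u).subtype (· ∈ {w | ∃ u, w ∈ K u})) where
  partition := by
    rintro ⟨w, u, hu⟩
    refine ⟨u, mem_subtype.mpr hu, fun v hv => ?_⟩
    by_contra hvu
    exact disjoint_left.mp (hcov.disjoint (hf.ne hvu)) (hK v (mem_subtype.mp hv)) (hK u hu)
  cliques v a ha b hb hab :=
    hcov.cliques (f v) a (hK v (mem_subtype.mp ha)) b (hK v (mem_subtype.mp hb))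
      (Subtype.coe_ne_coe.mpr hab)
  matching u v huv a ha b hb b' hb' hab hab' :=
    Subtype.ext <| hcov.matching huv a (hK u (mem_subtype.mp ha)) b (hK v (mem_subtype.mp hb))
      b' (hK v (mem_subtype.mp hb')) hab hab'
  nonadj u v huv hG a ha b hb :=
    hcov.nonadj (hf.ne huv) hG a (hK u (mem_subtype.mp ha)) b (hK v (mem_subtype.mp hb))

theorem card_subtype_mem_iUnion (u : U) :
    ((K u).subtype (· ∈ {w | ∃ u, w ∈ K u})).card = (K u).card := by
  rw [card_subtype, filter_true_of_mem fun w hw => ⟨u, hw⟩]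

end Restrict

end DPCover

section DPColorable

def DPColorable {V : Type} [Fintype V] (G : SimpleGraph V) (m : ℕ) : Prop :=
  ∀ (W : Type) (_ : Fintype W) (H : SimpleGraph W) (L : V → Finset W),
    DPCover G H L → (∀ v, (L v).card = m) →
    ∃ S : Finset W, IsIndepFinset H S ∧ S.card = Fintype.card V

variable {V : Type} [Fintype V] (G : SimpleGraph V)

theorem dpColorable_card : DPColorable G (Fintype.card V) := by
  intro W _ H L hcov hcard
  obtain ⟨S, hS, hScard, -⟩ := hcov.exists_isIndepFinset_card_eq univ (by simp [hcard])
  exact ⟨S, hS, hScard⟩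

theorem dpColorable_chiDP : DPColorable G (chiDP G) :=
  Nat.sInf_mem (s := {m | DPColorable G m}) ⟨_, dpColorable_card G⟩

theorem chiDP_le_card : chiDP G ≤ Fintype.card V :=
  Nat.sInf_le (dpColorable_card G)

end DPColorable

theorem DPCover.exists_isIndepFinset_of_subset {U V W : Type} [Fintype U] [Fintype W]
    {G : SimpleGraph V} {H : SimpleGraph W} {L : V → Finset W} (hcov : DPCover G H L)
    {f : U → V} (hf : Injective f) {K : U → Finset W}
    (hKL : ∀ u, K u ⊆ L (f u)) (hK : ∀ u, (K u).card = chiDP (G.comap f)) :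
    ∃ S : Finset W, IsIndepFinset H S ∧ S.card = Fintype.card U ∧ ∀ w ∈ S, ∃ u, w ∈ K u := by
  classical
  obtain ⟨S, hS, hScard⟩ := dpColorable_chiDP (G.comap f) _ inferInstance _ _
    (hcov.restrict hf hKL) fun u => (DPCover.card_subtype_mem_iUnion u).trans (hK u)
  refine ⟨S.map (Embedding.subtype _), hS.map_induce, by rw [card_map, hScard], ?_⟩
  simp only [mem_map, Embedding.subtype_apply, forall_exists_index, and_imp]
  rintro _ w - rfl
  exact w.2

theorem dpCover_boxProd_bot_top {V : Type} (G : SimpleGraph V) (t : ℕ) :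
    DPCover G ((⊥ : SimpleGraph V) □ (⊤ : SimpleGraph (Fin t))) fun v => {v} ×ˢ univ where
  partition w := ⟨w.1, by simp, fun v hv => by
    simp only [mem_product, mem_singleton] at hv
    exact hv.1.symm⟩
  cliques v a ha b hb hab := by
    simp only [mem_product, mem_singleton] at ha hb
    simp only [SimpleGraph.boxProd_adj, SimpleGraph.bot_adj, false_and, SimpleGraph.top_adj,
      false_or, ha.1, hb.1, and_true]
    exact fun h => hab (Prod.ext (ha.1.trans hb.1.symm) h)
  matching u v huv a ha b hb b' hb' hab := by
    simp only [mem_product, mem_singleton] at ha hb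
    simp only [SimpleGraph.boxProd_adj, SimpleGraph.bot_adj, false_and, false_or] at hab
    exact absurd (ha.1.symm.trans (hab.2.trans hb.1)) huv.ne
  nonadj u v huv _ a ha b hb hab := by
    simp only [mem_product, mem_singleton] at ha hb
    simp only [SimpleGraph.boxProd_adj, SimpleGraph.bot_adj, false_and, false_or] at hab
    exact huv (ha.1.symm.trans (hab.2.trans hb.1))

section AlphaDP

variable {U V : Type} [Fintype U] [Fintype V] (G : SimpleGraph V)

theorem exists_dpCover_indepNum_eq_alphaDP (t : ℕ) :
    ∃ (W : Type) (_ : Fintype W) (H : SimpleGraph W) (L : V → Finset W),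
      DPCover G H L ∧ (∀ v, (L v).card = t) ∧ _root_.indepNum H = alphaDP G t :=
  Nat.sInf_mem (s := {n | ∃ (W : Type) (_ : Fintype W) (H : SimpleGraph W) (L : V → Finset W),
      DPCover G H L ∧ (∀ v, (L v).card = t) ∧ _root_.indepNum H = n})
    ⟨_, V × Fin t, inferInstance, _, _, dpCover_boxProd_bot_top G t, by simp, rfl⟩

theorem DPColorable.card_le_alphaDP {t : ℕ} (hG : DPColorable G t) :
    Fintype.card V ≤ alphaDP G t := by
  obtain ⟨W, _, H, L, hcov, hcard, hH⟩ := exists_dpCover_indepNum_eq_alphaDP G t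
  obtain ⟨S, hS, hScard⟩ := hG W inferInstance H L hcov hcard
  exact hH ▸ hScard ▸ hS.card_le_indepNum

theorem alphaDP_comap_le {f : U → V} (hf : Injective f) (t : ℕ) :
    alphaDP (G.comap f) t ≤ alphaDP G t := by
  classical
  obtain ⟨W, _, H, L, hcov, hcard, hH⟩ := exists_dpCover_indepNum_eq_alphaDP G t
  calc alphaDP (G.comap f) t
      ≤ _root_.indepNum (H.induce {w | ∃ u, w ∈ L (f u)}) :=
        Nat.sInf_le ⟨_, inferInstance, _, _, hcov.restrict hf fun u => subset_rfl,
          fun u => (DPCover.card_subtype_mem_iUnion u).trans (hcard (f u)), rfl⟩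
    _ ≤ alphaDP G t := hH ▸ indepNum_induce_le _

end AlphaDP

section Join

variable {V : Type} (G : SimpleGraph V)

theorem joinComplete_comap_inl (p : ℕ) : (joinComplete G p).comap Sum.inl = G := by
  ext; rfl

theorem dpColorable_joinComplete_one [Fintype V] {t : ℕ} (ht : chiDP G < t) :
    DPColorable (joinComplete G 1) t := by
  classical
  intro W _ H L hcov hcard
  obtain ⟨w₀, hw₀⟩ : (L (.inr 0)).Nonempty := card_pos.mp (by rw [hcard]; omega)
  have hK : ∀ u, ∃ K ⊆ L (.inl u), K.card = chiDP G ∧ ∀ b ∈ K, ¬ H.Adj w₀ b := by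
    intro u
    have hadj := hcov.card_filter_adj_le_one Sum.inr_ne_inl hw₀ (v := .inl u)
    have hsplit := card_filter_add_card_filter_not (s := L (.inl u)) (H.Adj w₀)
    obtain ⟨K, hKsub, hKcard⟩ :=
      exists_subset_card_eq (s := (L (.inl u)).filter (¬ H.Adj w₀ ·)) (n := chiDP G)
        (by grind)
    exact ⟨K, hKsub.trans (filter_subset _ _), hKcard, fun b hb => (mem_filter.mp (hKsub hb)).2⟩
  choose K hKL hKcard hKw₀ using hK
  obtain ⟨S, hS, hScard, hSK⟩ := hcov.exists_isIndepFinset_of_subset Sum.inl_injective hKL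
    (by rwa [joinComplete_comap_inl])
  have hw₀S : w₀ ∉ S := fun hw₀S =>
    let ⟨u, hu⟩ := hSK w₀ hw₀S
    disjoint_left.mp (hcov.disjoint Sum.inr_ne_inl) hw₀ (hKL u hu)
  refine ⟨insert w₀ S, hS.insert fun a ha haw => ?_, ?_⟩
  · obtain ⟨u, hu⟩ := hSK a ha
    exact hKw₀ u a hu haw.symm
  · simp [card_insert_of_notMem hw₀S, hScard]

end Join

/-- If `G` is partially DP-nice and `χ_DP(G ∨ K₁) > χ_DP(G)`, then `G ∨ K₁` is
partially DP-nice. -/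
theorem partiallyDPNice_joinOne {V : Type} [Fintype V] (G : SimpleGraph V)
    (hnice : PartiallyDPNice G)
    (hchi : chiDP G < chiDP (joinComplete G 1)) :
    PartiallyDPNice (joinComplete G 1) := by
  intro t ht1 ht2
  have htχ' : (t : ℚ) ≤ chiDP (joinComplete G 1) := by exact_mod_cast ht2
  have ht : (1 : ℚ) ≤ t := by exact_mod_cast ht1
  rcases le_or_gt t (chiDP G) with hle | hlt
  · calc (t * Fintype.card (V ⊕ Fin 1) : ℚ) / chiDP (joinComplete G 1)
        ≤ t * Fintype.card V / chiDP G := by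
          have hχn : (chiDP G : ℚ) ≤ Fintype.card V := by exact_mod_cast chiDP_le_card G
          have hχχ' : (chiDP G : ℚ) + 1 ≤ chiDP (joinComplete G 1) := by exact_mod_cast hchi
          have htχ : (t : ℚ) ≤ chiDP G := by exact_mod_cast hle
          rw [div_le_div_iff₀ (by linarith) (by linarith)]
          push_cast [Fintype.card_sum, Fintype.card_fin]
          have htn : (0 : ℚ) ≤ t * Fintype.card V := by positivity
          nlinarith [mul_le_mul_of_nonneg_left hχχ' htn]
      _ ≤ alphaDP G t := hnice t ht1 hle
      _ ≤ alphaDP (joinComplete G 1) t := by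
          exact_mod_cast joinComplete_comap_inl G 1 ▸ alphaDP_comap_le _ Sum.inl_injective t
  · calc (t * Fintype.card (V ⊕ Fin 1) : ℚ) / chiDP (joinComplete G 1)
        ≤ Fintype.card (V ⊕ Fin 1) := by
          rw [div_le_iff₀ (by linarith), mul_comm]
          exact mul_le_mul_of_nonneg_left htχ' (by positivity)
      _ ≤ alphaDP (joinComplete G 1) t := by
          exact_mod_cast (dpColorable_joinComplete_one G hlt).card_le_alphaDP
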